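/- arXiv:1911.01002 — 2 statements merged into one kernel-verified Lean document; each statement's English description precedes it below -/
import Mathlib

section
/- Consider an n-bit Fibonacci FSR with update F determined by feedback f(X) = X 0 + g(X) + m(X), and a Galois FSR with update G where the last stage is fed f'(X) = X 0 + g(X) and stage b is fed X (b+1) + m_b(X), with m a monomial X_{i_1}···X_{i_k} (all i_j ≥ n-1-b... i.e. min index of m ≥ n-1-b) and m_b the monomial with each index decreased by n-1-b. Suppose g depends only on variables with index ≤ b. Define φ(X) i = X i + (m with each index decreased by n - i)(X) for b+1 ≤ i ≤ n-1, and φ(X) i = X i for i ≤ b. Then G ∘ φ = φ ∘ F. -/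
/-!
Write `m_c` for `m` with every index lowered by `c`, so that `φ` adds `m_{n-i}` to stage `i > b`.
One Fibonacci step moves stage `i + 1` to stage `i` and lowers all indices by one, which turns
`m_{n-i}` into `m_{n-i-1}`: the correction terms are carried along with the register. At stage `b`
the carried term is `m_{n-1-b}`, which the Galois feedback `m_b` cancels; at the last stage the
carried term is `m` itself, cancelling the monomial fed back by `f`. Everything else is untouched
because `m_b` and `g` only read stages `≤ b`, where `φ` is the identity.
-/

/-- The monomial with index set `S` (indices as naturals, out-of-range indices ignored). -/
def mono (n : ℕ) (S : Finset ℕ) (X : Fin n → ZMod 2) : ZMod 2 :=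
  ∏ i ∈ S, if h : i < n then X ⟨i, h⟩ else 1

section Monomial

variable {n : ℕ} {S : Finset ℕ}

theorem mono_congr {X Y : Fin n → ZMod 2}
    (h : ∀ j ∈ S, ∀ hj : j < n, X ⟨j, hj⟩ = Y ⟨j, hj⟩) : mono n S X = mono n S Y :=
  Finset.prod_congr rfl fun j hj => by by_cases hjn : j < n <;> simp [hjn, h j hj]

theorem mono_congr_of_le {d : ℕ} {X Y : Fin n → ZMod 2} (hS : ∀ j ∈ S, j ≤ d)
    (h : ∀ k : Fin n, (k : ℕ) ≤ d → X k = Y k) : mono n S X = mono n S Y :=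
  mono_congr fun j hj hjn => h ⟨j, hjn⟩ (hS j hj)

theorem mono_image_sub {c : ℕ} (hS : ∀ j ∈ S, c ≤ j) (X : Fin n → ZMod 2) :
    mono n (S.image (· - c)) X = ∏ j ∈ S, if h : j - c < n then X ⟨j - c, h⟩ else 1 :=
  Finset.prod_image fun x hx y hy hxy => by
    have := hS x hx; have := hS y hy; omega

theorem mono_image_sub_succ_of_shift {c : ℕ} (hS : ∀ j ∈ S, c < j ∧ j < n)
    {X Y : Fin n → ZMod 2} (hY : ∀ (k : ℕ) (hk : k + 1 < n), Y ⟨k, by omega⟩ = X ⟨k + 1, hk⟩) :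
    mono n (S.image (· - (c + 1))) Y = mono n (S.image (· - c)) X := by
  rw [mono_image_sub (fun j hj => (hS j hj).1), mono_image_sub (fun j hj => (hS j hj).1.le)]
  refine Finset.prod_congr rfl fun j hj => ?_
  obtain ⟨hcj, hjn⟩ := hS j hj
  have hsucc : j - (c + 1) + 1 = j - c := by omega
  rw [dif_pos (by omega), dif_pos (by omega), hY _ (by omega)]
  simp only [hsucc]

end Monomial

def compensate (n b : ℕ) (S : Finset ℕ) (X : Fin n → ZMod 2) (i : Fin n) : ZMod 2 :=
  if b + 1 ≤ (i : ℕ) then X i + mono n (S.image (fun j => j - (n - (i : ℕ)))) X else X i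

section Compensate

variable {n b : ℕ} {S : Finset ℕ} {X : Fin n → ZMod 2} {i : Fin n}

theorem compensate_of_le (h : (i : ℕ) ≤ b) : compensate n b S X i = X i :=
  if_neg (by omega)

theorem compensate_of_lt (h : b < i) :
    compensate n b S X i = X i + mono n (S.image (· - (n - (i : ℕ)))) X :=
  if_pos h

theorem mono_compensate {T : Finset ℕ} (hT : ∀ j ∈ T, j ≤ b) :
    mono n T (compensate n b S X) = mono n T X :=
  mono_congr_of_le hT fun _ hk => compensate_of_le hk

end Compensate

/-- Single-monomial shifting lemma (Lemma 1, Case 1): shifting a monomial `m` from `f_{n-1}`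
to `f_b` and compensating via `φ` conjugates the Fibonacci update to the Galois update. -/
theorem stmt3 (n b : ℕ) (hb : b + 1 < n) (S : Finset ℕ)
    (hS : ∀ j ∈ S, n - 1 - b ≤ j ∧ j ≤ n - 1)
    (g : (Fin n → ZMod 2) → ZMod 2)
    (hg : ∀ X Y : Fin n → ZMod 2, (∀ i : Fin n, (i : ℕ) ≤ b → X i = Y i) → g X = g Y)
    (F G φ : (Fin n → ZMod 2) → Fin n → ZMod 2)
    (hF : F = fun (X : Fin n → ZMod 2) (i : Fin n) =>
      if h : (i : ℕ) + 1 < n then X ⟨(i : ℕ) + 1, h⟩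
      else X ⟨0, i.pos⟩ + g X + mono n S X)
    (hG : G = fun (X : Fin n → ZMod 2) (i : Fin n) =>
      if h : (i : ℕ) + 1 < n then
        (if (i : ℕ) = b then X ⟨(i : ℕ) + 1, h⟩ + mono n (S.image (fun j => j - (n - 1 - b))) X
         else X ⟨(i : ℕ) + 1, h⟩)
      else X ⟨0, i.pos⟩ + g X)
    (hφ : φ = fun (X : Fin n → ZMod 2) (i : Fin n) =>
      if b + 1 ≤ (i : ℕ) then X i + mono n (S.image (fun j => j - (n - (i : ℕ)))) X
      else X i) :
    G ∘ φ = φ ∘ F := by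
  obtain rfl : φ = compensate n b S := hφ
  subst hF hG
  funext X i
  have hshift : ∀ c, c + 1 ≤ n - 1 - b → mono n (S.image (· - (c + 1)))
      (fun i : Fin n => if h : (i : ℕ) + 1 < n then X ⟨i + 1, h⟩
        else X ⟨0, i.pos⟩ + g X + mono n S X) = mono n (S.image (· - c)) X :=
    fun c hc => mono_image_sub_succ_of_shift (fun j hj => by have := hS j hj; omega)
      fun k hk => dif_pos hk
  have hmb_le : ∀ j ∈ S.image (· - (n - 1 - b)), j ≤ b := by
    simp only [Finset.mem_image]
    rintro _ ⟨j, hj, rfl⟩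
    have := hS j hj
    omega
  simp only [Function.comp_apply]
  by_cases hi : (i : ℕ) + 1 < n
  · simp only [dif_pos hi]
    rcases lt_trichotomy (i : ℕ) b with hib | rfl | hib
    · rw [if_neg hib.ne, compensate_of_le (by simp; omega), compensate_of_le hib.le, dif_pos hi]
    · rw [if_pos rfl, compensate_of_lt (by simp), compensate_of_le le_rfl, dif_pos hi,
        mono_compensate hmb_le, show n - ((⟨i + 1, hi⟩ : Fin n) : ℕ) = n - 1 - i by simp; omega,
        CharTwo.add_cancel_right]
    · rw [if_neg hib.ne', compensate_of_lt (by simp; omega), compensate_of_lt hib, dif_pos hi,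
        show n - (i : ℕ) = n - (i + 1) + 1 by omega, hshift _ (by omega)]
  · rw [dif_neg hi, compensate_of_le (Nat.zero_le b), compensate_of_lt (by omega),
      hg _ X fun k hk => compensate_of_le hk, dif_neg hi, show n - (i : ℕ) = 0 + 1 by omega,
      hshift 0 (by omega)]
    simp only [Nat.sub_zero, Finset.image_id', CharTwo.add_cancel_right]
end

section
/- Uniform Galois-to-Fibonacci transformation (inverse cancellation): let the Galois update G on (Fin n → ZMod 2) have (G X) i = X(i+1) + g_i(X) for i < n-1 with each g_i depending only on coordinates with index ≤ τ, g_i = 0 for i < τ, and (G X)(n-1) = X 0 + g_{n-1}(X) with g_{n-1} depending only on indices in [1, τ]. Assume n − τ ≤ τ. Define the Fibonacci update F with feedback f(X) = X 0 + g_{n-1}(X) + Σ_{i=τ}^{n-2} g_i|_{+(n-1-i)}(X), all other stages plain shifts, where g|_{+s} means every variable index increased by s. Define φ by (φ X) j = X j + C[j](X) with C[j] = Σ_{i: τ ≤ i ≤ n-2, i+1 ≤ j} g_i|_{+(j-i-1)}. Then G ∘ φ = φ ∘ F. -/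
/-- `g|_{+s}`: the Boolean function `g` with every variable index increased by `s`
(out-of-range indices read as `0`; irrelevant when `g` depends only on low indices). -/
def shiftUp (n s : ℕ) (g : (Fin n → ZMod 2) → ZMod 2) : (Fin n → ZMod 2) → ZMod 2 :=
  fun X => g fun j => if h : (j : ℕ) + s < n then X ⟨(j : ℕ) + s, h⟩ else 0

/-- Uniform Galois-to-Fibonacci transformation (Theorem 4): shifting all feedbacks `g_i`
of a uniform Galois NLFSR back to stage `n-1` and compensating by `φ` conjugates the
Fibonacci update to the Galois update. -/
theorem stmt11 (n τ : ℕ) (hτ : τ < n) (hnτ : n - τ ≤ τ)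
    (g : ℕ → (Fin n → ZMod 2) → ZMod 2)
    (hdep : ∀ i : ℕ, τ ≤ i → i ≤ n - 1 →
      ∀ X Y : Fin n → ZMod 2, (∀ j : Fin n, (j : ℕ) ≤ τ → X j = Y j) → g i X = g i Y)
    (hdeplast : ∀ X Y : Fin n → ZMod 2,
      (∀ j : Fin n, 1 ≤ (j : ℕ) → (j : ℕ) ≤ τ → X j = Y j) → g (n - 1) X = g (n - 1) Y)
    (F G φ : (Fin n → ZMod 2) → Fin n → ZMod 2)
    (hG : G = fun (X : Fin n → ZMod 2) (i : Fin n) =>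
      if h : (i : ℕ) + 1 < n then
        X ⟨(i : ℕ) + 1, h⟩ + (if τ ≤ (i : ℕ) then g (i : ℕ) X else 0)
      else X ⟨0, i.pos⟩ + g (n - 1) X)
    (hF : F = fun (X : Fin n → ZMod 2) (i : Fin n) =>
      if h : (i : ℕ) + 1 < n then X ⟨(i : ℕ) + 1, h⟩
      else X ⟨0, i.pos⟩ + g (n - 1) X +
        ∑ k ∈ Finset.Ico τ (n - 1), shiftUp n (n - 1 - k) (g k) X)
    (hφ : φ = fun (X : Fin n → ZMod 2) (j : Fin n) =>
      X j + ∑ k ∈ (Finset.Ico τ (n - 1)).filter (fun k => k + 1 ≤ (j : ℕ)),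
        shiftUp n ((j : ℕ) - k - 1) (g k) X) :
    G ∘ φ = φ ∘ F := by

  have key_low : ∀ (X : Fin n → ZMod 2) (j : Fin n), (j : ℕ) ≤ τ → φ X j = X j := by
    intro X j hj
    have hemp : (Finset.Ico τ (n-1)).filter (fun k => k + 1 ≤ (j : ℕ)) = ∅ := by
      apply Finset.filter_false_of_mem
      intro k hk
      simp only [Finset.mem_Ico] at hk
      omega
    simp only [hφ, hemp, Finset.sum_empty, add_zero]
  have hgφ : ∀ (X : Fin n → ZMod 2) (k : ℕ), τ ≤ k → k ≤ n - 1 → g k (φ X) = g k X :=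
    fun X k hk hk' => hdep k hk hk' _ _ (fun j hj => key_low X j hj)
  have hglast : ∀ (X : Fin n → ZMod 2), g (n-1) (φ X) = g (n-1) X :=
    fun X => hdeplast _ _ (fun j _ hj => key_low X j hj)
  have hshift0 : ∀ (k : ℕ) (X : Fin n → ZMod 2), shiftUp n 0 (g k) X = g k X := by
    intro k X
    simp [shiftUp]
  have hshiftF : ∀ (X : Fin n → ZMod 2) (k s : ℕ), τ ≤ k → k ≤ n - 1 →
      τ + s + 1 ≤ n - 1 → shiftUp n s (g k) (F X) = shiftUp n (s+1) (g k) X := by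
    intro X k s hk hk' hs
    unfold shiftUp
    apply hdep k hk hk'
    intro j hj
    have h1 : (j : ℕ) + s < n := by omega
    have h2 : (j : ℕ) + (s+1) < n := by omega
    rw [dif_pos h1, dif_pos h2]
    simp only [hF]
    have h3 : ((⟨(j : ℕ) + s, h1⟩ : Fin n) : ℕ) + 1 < n := by simp; omega
    rw [dif_pos h3]
    apply congrArg
    apply Fin.ext
    simp [Nat.add_assoc]
  funext X i
  simp only [Function.comp_apply]
  by_cases hi : (i : ℕ) + 1 < n
  · -- non-boundary coordinate
    rw [hG]
    simp only []
    rw [dif_pos hi]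
    conv_rhs => rw [hφ]
    simp only []
    have hsum : ∀ T : Finset ℕ, T ⊆ (Finset.Ico τ (n-1)).filter (fun k => k + 1 ≤ (i : ℕ)) →
        (∑ k ∈ T, shiftUp n ((i : ℕ) - k - 1) (g k) (F X))
        = ∑ k ∈ T, shiftUp n ((i : ℕ) - k) (g k) X := by
      intro T hT
      apply Finset.sum_congr rfl
      intro k hk
      have hk2 := hT hk
      simp only [Finset.mem_filter, Finset.mem_Ico] at hk2
      rw [hshiftF X k ((i : ℕ) - k - 1) hk2.1.1 (by omega) (by omega)]
      congr 1
      omega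
    rw [hsum _ (subset_refl _)]
    simp only [hF]
    rw [dif_pos hi]
    by_cases hτi : τ ≤ (i : ℕ)
    · rw [if_pos hτi, hgφ X (i : ℕ) hτi (by omega)]
      conv_lhs => rw [hφ]
      simp only []
      have hA : (Finset.Ico τ (n-1)).filter (fun k => k + 1 ≤ ((⟨(i : ℕ) + 1, hi⟩ : Fin n) : ℕ))
          = insert (i : ℕ) ((Finset.Ico τ (n-1)).filter (fun k => k + 1 ≤ (i : ℕ))) := by
        ext k
        simp only [Finset.mem_filter, Finset.mem_Ico, Finset.mem_insert]
        omega
      have hni : (i : ℕ) ∉ (Finset.Ico τ (n-1)).filter (fun k => k + 1 ≤ (i : ℕ)) := by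
        simp only [Finset.mem_filter, Finset.mem_Ico]
        omega
      rw [hA, Finset.sum_insert hni]
      have h0 : ((⟨(i : ℕ) + 1, hi⟩ : Fin n) : ℕ) - (i : ℕ) - 1 = 0 := by simp
      rw [h0, hshift0]
      have hB : (∑ k ∈ (Finset.Ico τ (n-1)).filter (fun k => k + 1 ≤ (i : ℕ)),
            shiftUp n (((⟨(i : ℕ) + 1, hi⟩ : Fin n) : ℕ) - k - 1) (g k) X)
          = ∑ k ∈ (Finset.Ico τ (n-1)).filter (fun k => k + 1 ≤ (i : ℕ)),
            shiftUp n ((i : ℕ) - k) (g k) X := by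
        apply Finset.sum_congr rfl
        intro k hk
        simp only [Finset.mem_filter, Finset.mem_Ico] at hk
        congr 1
        simp
        omega
      rw [hB]
      linear_combination CharTwo.add_self_eq_zero (g (i : ℕ) X)
    · rw [if_neg hτi]
      conv_lhs => rw [hφ]
      simp only []
      have hA : (Finset.Ico τ (n-1)).filter (fun k => k + 1 ≤ ((⟨(i : ℕ) + 1, hi⟩ : Fin n) : ℕ))
          = ∅ := by
        apply Finset.filter_false_of_mem
        intro k hk
        simp only [Finset.mem_Ico] at hk
        simp
        omega
      have hB : (Finset.Ico τ (n-1)).filter (fun k => k + 1 ≤ (i : ℕ)) = ∅ := by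
        apply Finset.filter_false_of_mem
        intro k hk
        simp only [Finset.mem_Ico] at hk
        omega
      rw [hA, hB, Finset.sum_empty, Finset.sum_empty, add_zero, add_zero]
  · -- boundary coordinate i = n-1
    have hival : (i : ℕ) = n - 1 := by have := i.isLt; omega
    rw [hG]
    simp only []
    rw [dif_neg hi, hglast, key_low X ⟨0, i.pos⟩ (by simp)]
    conv_rhs => rw [hφ]
    simp only []
    have hfull : (Finset.Ico τ (n-1)).filter (fun k => k + 1 ≤ (i : ℕ))
        = Finset.Ico τ (n-1) := by
      apply Finset.filter_true_of_mem
      intro k hk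
      simp only [Finset.mem_Ico] at hk
      omega
    rw [hfull]
    have hS : (∑ k ∈ Finset.Ico τ (n-1), shiftUp n ((i : ℕ) - k - 1) (g k) (F X))
        = ∑ k ∈ Finset.Ico τ (n-1), shiftUp n (n - 1 - k) (g k) X := by
      apply Finset.sum_congr rfl
      intro k hk
      simp only [Finset.mem_Ico] at hk
      rw [hshiftF X k ((i : ℕ) - k - 1) hk.1 (by omega) (by omega)]
      congr 1
      omega
    rw [hS]
    simp only [hF]
    rw [dif_neg hi]
    linear_combination -CharTwo.add_self_eq_zero
      (∑ k ∈ Finset.Ico τ (n-1), shiftUp n (n - 1 - k) (g k) X)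
end
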